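/- Let 2 ≤ k ≤ n-1, λ ∈ Γₙ, and suppose the quadratic form η ↦ d²f_k(λ, λη) (the second differential of f_k(λ)=log σ_k(λ) in rescaled direction λη) is negative semidefinite on ℝⁿ and vanishes at some η̄ ≠ 0. Then the n×n matrix G_k(λ) with entries G_k(λ)_{ij} = σ_{k-2}^{(i,j)}(λ) for i ≠ j and 0 on the diagonal is singular. Conversely, if G_k(λ) is nonsingular then d²f_k(λ, λη) < 0 for all η ≠ 0. -/

import Mathlib

/-!
`σ_k` is hyperbolic with respect to the positive cone: for `λ > 0` the polynomial
`t ↦ σ_k(λ + tλη)` has only real roots (by Gauss–Lucas, `σ_k` does not vanish on a product of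
open half-planes), so its coefficients satisfy `2 c₀ c₂ ≤ c₁²`, which is `Q ≤ 0`.
Up to the factor `σ_k²`, `Q(η)` is `-(dσ_k)² + σ_k d²σ_k` along `λη`; in the variable `ζ = λη` the
Hessian of `σ_k` is `G_k(λ)` and Euler's relation expresses `dσ_k` through `G_k(λ)` as well.
A zero of a semidefinite quadratic form lies in the kernel of its matrix, and this produces the
kernel vector `λη̄` of `G_k(λ)`.
-/

open Finset Matrix

/-- σ_k(λ): the k-th elementary symmetric polynomial. -/
def esymmFun (n k : ℕ) (lam : Fin n → ℝ) : ℝ :=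
  ∑ t ∈ (univ : Finset (Fin n)).powersetCard k, ∏ i ∈ t, lam i

/-- σ_m^{(i,j)}(λ): σ_m of λ with λᵢ and λⱼ set to 0. -/
def esymmOmit2 (n m : ℕ) (i j : Fin n) (lam : Fin n → ℝ) : ℝ :=
  ∑ t ∈ ((univ : Finset (Fin n)) \ {i, j}).powersetCard m, ∏ p ∈ t, lam p

/-- γ_{(i)} = λ_{i₁}⋯λ_{i_k}/σ_k(λ). -/
noncomputable def gam (n k : ℕ) (lam : Fin n → ℝ) (t : Finset (Fin n)) : ℝ :=
  (∏ i ∈ t, lam i) / esymmFun n k lam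

/-- Q(η) = d²(log σ_k)(λ, λη). -/
noncomputable def Qform (n k : ℕ) (lam η : Fin n → ℝ) : ℝ :=
  -(∑ t ∈ (univ : Finset (Fin n)).powersetCard k,
      gam n k lam t * ∑ p ∈ t, η p) ^ 2 +
    ∑ t ∈ (univ : Finset (Fin n)).powersetCard k,
      gam n k lam t * (∑ p ∈ t, η p) ^ 2 -
    ∑ t ∈ (univ : Finset (Fin n)).powersetCard k,
      gam n k lam t * ∑ p ∈ t, (η p) ^ 2

/-- The matrix G_k(λ) with off-diagonal entries σ_{k-2}^{(i,j)}(λ) and zero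
diagonal. -/
noncomputable def Gmat (n k : ℕ) (lam : Fin n → ℝ) : Matrix (Fin n) (Fin n) ℝ :=
  Matrix.of fun i j => if i = j then 0 else esymmOmit2 n (k - 2) i j lam

open Polynomial ComplexConjugate

theorem Polynomial.rootSet_iterate_derivative_subset {P : ℂ[X]} {s : Set ℂ} (hs : Convex ℝ s)
    (hP : P.rootSet ℂ ⊆ s) (m : ℕ) : (derivative^[m] P).rootSet ℂ ⊆ s := by
  induction m with
  | zero => exact hP
  | succ m ih =>
    rw [Function.iterate_succ_apply']
    rcases lt_or_ge 0 (derivative^[m] P).degree with hdeg | hdeg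
    · exact (rootSet_derivative_subset_convexHull_rootSet hdeg).trans (convexHull_min ih hs)
    · simp [derivative_of_natDegree_zero (natDegree_eq_zero_iff_degree_le_zero.2 hdeg)]

section Hyperbolicity

variable {ι : Type*} [Fintype ι] {k : ℕ}

/-- The roots `-zᵢ` of `∏ (X + zᵢ)` lie in the open lower half-plane, hence by Gauss–Lucas so do
those of its `(n - k)`-th derivative, whose constant coefficient is `(n - k)! σ_k(z)`. -/
theorem sum_prod_ne_zero_of_forall_im_pos (hk : k ≤ Fintype.card ι) {z : ι → ℂ}
    (hz : ∀ i, 0 < (z i).im) : ∑ T ∈ univ.powersetCard k, ∏ i ∈ T, z i ≠ 0 := by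
  set m := Fintype.card ι - k
  set P : ℂ[X] := ∏ i, (X + C (z i))
  have hcoeff : ∀ j ≤ Fintype.card ι,
      P.coeff j = ∑ T ∈ univ.powersetCard (Fintype.card ι - j), ∏ i ∈ T, z i := fun j hj => by
    simpa using Finset.prod_X_add_C_coeff univ z (by simpa using hj)
  have hroots : P.rootSet ℂ ⊆ {w | w.im < 0} := by
    intro w hw
    obtain ⟨i, -, hi⟩ := prod_eq_zero_iff.1 (by simpa [P, eval_prod] using (mem_rootSet.1 hw).2)
    have := congrArg Complex.im hi
    simp only [Complex.add_im, Complex.zero_im] at this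
    show w.im < 0
    linarith [hz i]
  have hne : derivative^[m] P ≠ 0 := by
    intro h
    have := congrArg (coeff · k) h
    simp only [coeff_iterate_derivative, coeff_zero] at this
    rw [show k + m = Fintype.card ι by omega, hcoeff _ le_rfl, Nat.sub_self,
      powersetCard_zero, sum_singleton, prod_empty, nsmul_eq_mul, mul_one, Nat.cast_eq_zero,
      Nat.descFactorial_eq_zero_iff_lt] at this
    omega
  intro h
  have h0 : (0 : ℂ) ∈ (derivative^[m] P).rootSet ℂ := by
    rw [mem_rootSet, coe_aeval_eq_eval, ← coeff_zero_eq_eval_zero, coeff_iterate_derivative,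
      zero_add, hcoeff _ (Nat.sub_le _ _), show Fintype.card ι - m = k by omega, h, smul_zero]
    exact ⟨hne, rfl⟩
  simpa using rootSet_iterate_derivative_subset
    (convex_halfSpace_lt Complex.imLm.isLinear 0) hroots m h0

theorem sum_prod_ne_zero_of_forall_im_neg (hk : k ≤ Fintype.card ι) {z : ι → ℂ}
    (hz : ∀ i, (z i).im < 0) : ∑ T ∈ univ.powersetCard k, ∏ i ∈ T, z i ≠ 0 := by
  have := sum_prod_ne_zero_of_forall_im_pos hk (z := fun i => conj (z i)) (by simpa using hz)
  contrapose! this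
  simpa [map_sum, map_prod] using congrArg conj this

noncomputable def esymmLine (k : ℕ) (lam η : ι → ℝ) : ℝ[X] :=
  ∑ T ∈ univ.powersetCard k, ∏ i ∈ T, C (lam i) * (1 + C (η i) * X)

/-- At a non-real `τ`, `σ_k(λ + τλη) = τ ^ k σ_k(λ(η + τ⁻¹))`, and all `λᵢ(ηᵢ + τ⁻¹)` lie in one
open half-plane. -/
theorem esymmLine_splits (hk : k ≤ Fintype.card ι) {lam : ι → ℝ} (hlam : ∀ i, 0 < lam i)
    (η : ι → ℝ) : (esymmLine k lam η).Splits := by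
  refine Splits.of_splits_map Complex.ofRealHom (IsAlgClosed.splits _) fun τ hτ => ?_
  have hroot : ∑ T ∈ univ.powersetCard k, ∏ i ∈ T, (lam i * (1 + η i * τ) : ℂ) = 0 := by
    simpa [esymmLine, Polynomial.map_sum, Polynomial.map_prod, eval_finsetSum, eval_prod]
      using (mem_roots'.1 hτ).2
  by_contra hreal
  have hτim : τ.im ≠ 0 := fun h => hreal ⟨τ.re, Complex.ext (by simp) (by simp [h])⟩
  have hτ0 : τ ≠ 0 := fun h => hτim (by simp [h])
  set w : ι → ℂ := fun i => lam i * (η i + τ⁻¹)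
  have hw : ∀ i, (w i).im = lam i * (τ⁻¹).im := fun i => by simp [w]
  have hscale : ∑ T ∈ univ.powersetCard k, ∏ i ∈ T, (lam i * (1 + η i * τ) : ℂ) =
      τ ^ k * ∑ T ∈ univ.powersetCard k, ∏ i ∈ T, w i := by
    rw [mul_sum]
    refine sum_congr rfl fun T hT => ?_
    rw [← (mem_powersetCard_univ.1 hT), ← prod_const, ← prod_mul_distrib]
    refine prod_congr rfl fun i _ => ?_
    simp only [w]
    field_simp
    ring
  rw [hscale, mul_eq_zero] at hroot
  refine hroot.elim (pow_ne_zero k hτ0) ?_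
  rcases hτim.lt_or_gt with hneg | hpos
  · refine sum_prod_ne_zero_of_forall_im_pos hk fun i => ?_
    rw [hw, Complex.inv_im]
    exact mul_pos (hlam i) (div_pos (neg_pos.2 hneg) (Complex.normSq_pos.2 hτ0))
  · refine sum_prod_ne_zero_of_forall_im_neg hk fun i => ?_
    rw [hw, Complex.inv_im]
    exact mul_neg_of_pos_of_neg (hlam i)
      (div_neg_of_neg_of_pos (neg_neg_of_pos hpos) (Complex.normSq_pos.2 hτ0))

end Hyperbolicity

section LogConcavity

variable {K : Type*} [Field K] [LinearOrder K] [IsStrictOrderedRing K]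

theorem Polynomial.two_mul_coeff_zero_mul_coeff_two_le_of_prod_X_sub_C (s : Multiset K) :
    2 * (s.map (X - C ·)).prod.coeff 0 * (s.map (X - C ·)).prod.coeff 2 ≤
      (s.map (X - C ·)).prod.coeff 1 ^ 2 := by
  induction s using Multiset.induction_on with
  | empty => simp [coeff_one]
  | cons r s ih =>
    rw [Multiset.map_cons, Multiset.prod_cons, mul_comm (X - C r)]
    set q := (s.map (X - C ·)).prod
    have h0 : (q * (X - C r)).coeff 0 = -(q.coeff 0 * r) := by simp [mul_coeff_zero]
    rw [h0, coeff_mul_X_sub_C (a := 0), coeff_mul_X_sub_C (a := 1)]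
    -- `p₁² - 2 p₀ p₂ = q₀² + r² (q₁² - 2 q₀ q₂)` for `p = (X - r) q`
    nlinarith [sq_nonneg (q.coeff 0), mul_le_mul_of_nonneg_left ih (sq_nonneg r)]

theorem Polynomial.Splits.two_mul_coeff_zero_mul_coeff_two_le {p : K[X]} (hp : p.Splits) :
    2 * p.coeff 0 * p.coeff 2 ≤ p.coeff 1 ^ 2 := by
  rw [hp.eq_prod_roots]
  simp only [coeff_C_mul]
  nlinarith [mul_le_mul_of_nonneg_left
    (two_mul_coeff_zero_mul_coeff_two_le_of_prod_X_sub_C p.roots) (sq_nonneg p.leadingCoeff)]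

end LogConcavity

section Coefficients

variable {ι R : Type*} [CommRing R] (s : Finset ι) (η : ι → R)

theorem Polynomial.coeff_one_add_C_mul_X_mul_succ (c : R) (q : R[X]) (m : ℕ) :
    ((1 + C c * X) * q).coeff (m + 1) = q.coeff (m + 1) + c * q.coeff m := by
  simp [add_mul, mul_assoc, coeff_C_mul, coeff_X_mul]

theorem Polynomial.coeff_zero_prod_one_add_C_mul_X : (∏ i ∈ s, (1 + C (η i) * X)).coeff 0 = 1 := by
  simp [coeff_zero_eq_eval_zero, eval_prod]

theorem Polynomial.coeff_one_prod_one_add_C_mul_X :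
    (∏ i ∈ s, (1 + C (η i) * X)).coeff 1 = ∑ i ∈ s, η i := by
  classical
  induction s using Finset.induction_on with
  | empty => simp [coeff_one]
  | insert a s ha ih =>
    rw [prod_insert ha, sum_insert ha, coeff_one_add_C_mul_X_mul_succ, ih,
      coeff_zero_prod_one_add_C_mul_X]
    ring

theorem Polynomial.two_mul_coeff_two_prod_one_add_C_mul_X :
    2 * (∏ i ∈ s, (1 + C (η i) * X)).coeff 2 = (∑ i ∈ s, η i) ^ 2 - ∑ i ∈ s, η i ^ 2 := by
  classical
  induction s using Finset.induction_on with
  | empty => simp [coeff_one]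
  | insert a s ha ih =>
    rw [prod_insert ha, sum_insert ha, sum_insert ha, coeff_one_add_C_mul_X_mul_succ, mul_add, ih,
      coeff_one_prod_one_add_C_mul_X]
    ring

end Coefficients

section Variations

variable {n : ℕ} (k : ℕ) (lam : Fin n → ℝ)

/-- `d/dt σ_k(λ + t λ η)` at `t = 0`. -/
def dEsymm (η : Fin n → ℝ) : ℝ :=
  ∑ T ∈ univ.powersetCard k, (∏ i ∈ T, lam i) * ∑ p ∈ T, η p

/-- `d²σ_k(λ)(λ η, λ δ)`. -/
def d2Esymm (η δ : Fin n → ℝ) : ℝ :=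
  ∑ T ∈ univ.powersetCard k,
    (∏ i ∈ T, lam i) * ((∑ p ∈ T, η p) * (∑ p ∈ T, δ p) - ∑ p ∈ T, η p * δ p)

theorem Qform_eq (η : Fin n → ℝ) :
    Qform n k lam η = -(dEsymm k lam η / esymmFun n k lam) ^ 2 +
      d2Esymm k lam η η / esymmFun n k lam := by
  simp only [Qform, gam, dEsymm, d2Esymm, sum_div, add_sub_assoc, ← sum_sub_distrib]
  congr 1
  · congr 2
    exact sum_congr rfl fun T _ => by ring
  · congr 1 with T
    simp only [← sq]
    ring

theorem esymmFun_pos (hk : k ≤ n) (hlam : ∀ i, 0 < lam i) : 0 < esymmFun n k lam :=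
  sum_pos (fun T _ => prod_pos fun i _ => hlam i) (powersetCard_nonempty.2 (by simpa using hk))

theorem esymmLine_coeff (η : Fin n → ℝ) (m : ℕ) : (esymmLine k lam η).coeff m =
    ∑ T ∈ univ.powersetCard k, (∏ i ∈ T, lam i) * (∏ i ∈ T, (1 + C (η i) * X)).coeff m := by
  simp only [esymmLine, prod_mul_distrib, ← map_prod, finsetSum_coeff, coeff_C_mul]

theorem esymmLine_coeff_zero (η : Fin n → ℝ) : (esymmLine k lam η).coeff 0 = esymmFun n k lam := by
  simp [esymmLine_coeff, coeff_zero_prod_one_add_C_mul_X, esymmFun]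

theorem esymmLine_coeff_one (η : Fin n → ℝ) : (esymmLine k lam η).coeff 1 = dEsymm k lam η := by
  simp [esymmLine_coeff, coeff_one_prod_one_add_C_mul_X, dEsymm]

theorem two_mul_esymmLine_coeff_two (η : Fin n → ℝ) :
    2 * (esymmLine k lam η).coeff 2 = d2Esymm k lam η η := by
  rw [d2Esymm, esymmLine_coeff, mul_sum]
  refine sum_congr rfl fun T _ => ?_
  rw [mul_left_comm, two_mul_coeff_two_prod_one_add_C_mul_X]
  simp only [sq]

theorem Qform_nonpos (hk : k ≤ n) (hlam : ∀ i, 0 < lam i) (η : Fin n → ℝ) :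
    Qform n k lam η ≤ 0 := by
  have hS := esymmFun_pos k lam hk hlam
  have h := (esymmLine_splits (by simpa using hk) hlam η).two_mul_coeff_zero_mul_coeff_two_le
  rw [mul_right_comm, two_mul_esymmLine_coeff_two, esymmLine_coeff_zero, esymmLine_coeff_one] at h
  have hQ : Qform n k lam η = (esymmFun n k lam * d2Esymm k lam η η - dEsymm k lam η ^ 2) /
      esymmFun n k lam ^ 2 := by
    rw [Qform_eq]
    field_simp
    ring
  rw [hQ]
  exact div_nonpos_of_nonpos_of_nonneg (by linarith) (sq_nonneg _)

end Variations

theorem Finset.sum_mul_sum_sub_sum_mul {ι R : Type*} [DecidableEq ι] [CommRing R] (T : Finset ι)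
    (f g : ι → R) : (∑ i ∈ T, f i) * (∑ j ∈ T, g j) - ∑ i ∈ T, f i * g i =
      ∑ i ∈ T, ∑ j ∈ T.erase i, f i * g j := by
  rw [sum_mul_sum, ← sum_sub_distrib]
  exact sum_congr rfl fun i hi => by rw [← add_sum_erase T _ hi, add_sub_cancel_left]

section Hessian

variable {n : ℕ} {k : ℕ} (lam : Fin n → ℝ)

theorem sum_prod_of_pair_subset (hk : 2 ≤ k) {i j : Fin n} (hij : i ≠ j) :
    ∑ T ∈ univ.powersetCard k with {i, j} ⊆ T, ∏ p ∈ T, lam p =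
      lam i * lam j * esymmOmit2 n (k - 2) i j lam := by
  have hpair : #({i, j} : Finset (Fin n)) = 2 := card_pair hij
  rw [esymmOmit2, mul_sum]
  refine sum_nbij' (· \ {i, j}) (· ∪ {i, j}) ?_ ?_ ?_ ?_ ?_
  · intro T hT
    obtain ⟨hcard, hsub⟩ := mem_filter.1 hT
    refine mem_powersetCard.2 ⟨sdiff_subset_sdiff (subset_univ T) subset_rfl, ?_⟩
    rw [card_sdiff_of_subset hsub, mem_powersetCard_univ.1 hcard, hpair]
  · intro U hU
    obtain ⟨hsub, hcard⟩ := mem_powersetCard.1 hU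
    have hdisj : Disjoint U {i, j} := sdiff_disjoint.mono_left hsub
    refine mem_filter.2 ⟨mem_powersetCard_univ.2 ?_, subset_union_right⟩
    rw [card_union_of_disjoint hdisj, hcard, hpair]
    omega
  · intro T hT
    exact sdiff_union_of_subset (mem_filter.1 hT).2
  · intro U hU
    exact union_sdiff_cancel_right (sdiff_disjoint.mono_left (mem_powersetCard.1 hU).1)
  · intro T hT
    rw [← prod_sdiff (mem_filter.1 hT).2, prod_pair hij]
    ring

theorem Gmat_mulVec_apply (v : Fin n → ℝ) (i : Fin n) :
    (Gmat n k lam *ᵥ v) i = ∑ j ∈ univ.erase i, esymmOmit2 n (k - 2) i j lam * v j := by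
  rw [mulVec, dotProduct, ← add_sum_erase _ _ (mem_univ i)]
  simp only [Gmat, of_apply, ↓reduceIte, zero_mul, zero_add]
  exact sum_congr rfl fun j hj => by rw [if_neg (ne_of_mem_erase hj).symm]

theorem d2Esymm_eq_dotProduct_Gmat (hk : 2 ≤ k) (η δ : Fin n → ℝ) :
    d2Esymm k lam η δ = (lam * η) ⬝ᵥ Gmat n k lam *ᵥ (lam * δ) := by
  calc d2Esymm k lam η δ
      = ∑ T ∈ univ.powersetCard k, ∑ i ∈ T, ∑ j ∈ T.erase i, (∏ p ∈ T, lam p) * (η i * δ j) := by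
        simp only [d2Esymm, sum_mul_sum_sub_sum_mul]
        simp only [mul_sum]
    _ = ∑ i, ∑ j ∈ univ.erase i,
          ∑ T ∈ univ.powersetCard k with {i, j} ⊆ T, (∏ p ∈ T, lam p) * (η i * δ j) := by
        rw [sum_comm' (t' := univ) (s' := fun i => (univ.powersetCard k).filter (i ∈ ·))
          (by simp)]
        refine sum_congr rfl fun i _ => sum_comm' fun T j => ?_
        simp only [mem_filter, mem_powersetCard, subset_univ, true_and, mem_erase, ne_eq,
          insert_subset_iff, singleton_subset_iff, mem_univ, and_true]
        tauto
    _ = (lam * η) ⬝ᵥ Gmat n k lam *ᵥ (lam * δ) := by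
        simp only [dotProduct, Gmat_mulVec_apply, mul_sum, ← sum_mul]
        refine sum_congr rfl fun i _ => sum_congr rfl fun j hj => ?_
        rw [sum_prod_of_pair_subset lam hk (ne_of_mem_erase hj).symm, Pi.mul_apply, Pi.mul_apply]
        ring

end Hessian

section Kernel

variable {n k : ℕ} (lam : Fin n → ℝ)

theorem dEsymm_one : dEsymm k lam 1 = k * esymmFun n k lam := by
  simp only [dEsymm, esymmFun, mul_sum, Pi.one_apply, sum_const, nsmul_one]
  exact sum_congr rfl fun T hT => by rw [mem_powersetCard_univ.1 hT, mul_comm]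

theorem d2Esymm_one_left (η : Fin n → ℝ) : d2Esymm k lam 1 η = (k - 1) * dEsymm k lam η := by
  rw [d2Esymm, dEsymm, mul_sum]
  refine sum_congr rfl fun T hT => ?_
  simp only [Pi.one_apply, one_mul, sum_const, nsmul_one, mem_powersetCard_univ.1 hT]
  ring

theorem sub_one_mul_dEsymm (hk : 2 ≤ k) (η : Fin n → ℝ) :
    ((k : ℝ) - 1) * dEsymm k lam η = (lam ᵥ* Gmat n k lam) ⬝ᵥ (lam * η) := by
  rw [← d2Esymm_one_left, d2Esymm_eq_dotProduct_Gmat lam hk, mul_one, dotProduct_mulVec]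

theorem Gmat_isHermitian : (Gmat n k lam).IsHermitian :=
  IsHermitian.ext fun i j => by simp [Gmat, esymmOmit2, eq_comm, pair_comm]

variable (n k) in
/-- The matrix of `-((k - 1) σ_k(λ))² Q` in the variable `ζ = λη`. -/
noncomputable def Qmat : Matrix (Fin n) (Fin n) ℝ :=
  vecMulVec (lam ᵥ* Gmat n k lam) (lam ᵥ* Gmat n k lam) -
    (((k : ℝ) - 1) ^ 2 * esymmFun n k lam) • Gmat n k lam

theorem Qmat_mulVec (ζ : Fin n → ℝ) : Qmat n k lam *ᵥ ζ =
    ((lam ᵥ* Gmat n k lam) ⬝ᵥ ζ) • (lam ᵥ* Gmat n k lam) -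
      (((k : ℝ) - 1) ^ 2 * esymmFun n k lam) • Gmat n k lam *ᵥ ζ := by
  simp [Qmat, sub_mulVec, vecMulVec_mulVec, smul_mulVec, dotProduct_comm _ ζ]

theorem dotProduct_Qmat_mulVec (hk : 2 ≤ k) (hS : esymmFun n k lam ≠ 0) (η : Fin n → ℝ) :
    (lam * η) ⬝ᵥ Qmat n k lam *ᵥ (lam * η) =
      -((((k : ℝ) - 1) * esymmFun n k lam) ^ 2 * Qform n k lam η) := by
  rw [Qmat_mulVec, dotProduct_sub, dotProduct_smul, dotProduct_smul, smul_eq_mul, smul_eq_mul,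
    dotProduct_comm (lam * η) (lam ᵥ* Gmat n k lam), ← sub_one_mul_dEsymm lam hk,
    ← d2Esymm_eq_dotProduct_Gmat lam hk, Qform_eq]
  field_simp
  ring

theorem Qmat_posSemidef (hk2 : 2 ≤ k) (hkn : k ≤ n) (hlam : ∀ i, 0 < lam i) :
    (Qmat n k lam).PosSemidef := by
  refine .of_dotProduct_mulVec_nonneg ?_ fun ζ => ?_
  · have hu := (posSemidef_vecMulVec_self_star (lam ᵥ* Gmat n k lam)).isHermitian
    rw [star_trivial] at hu
    exact hu.sub ((Gmat_isHermitian lam).smul (IsSelfAdjoint.all _))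
  · have hζ : lam * (ζ / lam) = ζ := funext fun i => mul_div_cancel₀ _ (hlam i).ne'
    rw [star_trivial, ← hζ, dotProduct_Qmat_mulVec lam hk2 (esymmFun_pos k lam hkn hlam).ne',
      neg_nonneg]
    exact mul_nonpos_of_nonneg_of_nonpos (sq_nonneg _) (Qform_nonpos k lam hkn hlam _)

/-- Pairing `Qmat *ᵥ λη₀ = 0` with `λ` and using Euler's relation leaves
`(k - 1) σ_k ⟨λᵀG, λη₀⟩ = 0`. -/
theorem Gmat_mulVec_eq_zero_of_Qform_eq_zero (hk2 : 2 ≤ k) (hkn : k ≤ n) (hlam : ∀ i, 0 < lam i)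
    {η₀ : Fin n → ℝ} (hQ : Qform n k lam η₀ = 0) : Gmat n k lam *ᵥ (lam * η₀) = 0 := by
  have hS := esymmFun_pos k lam hkn hlam
  have hk1 : (0 : ℝ) < k - 1 := by
    have : (2 : ℝ) ≤ k := by exact_mod_cast hk2
    linarith
  have hker : Qmat n k lam *ᵥ (lam * η₀) = 0 := by
    rw [← (Qmat_posSemidef lam hk2 hkn hlam).dotProduct_mulVec_zero_iff, star_trivial,
      dotProduct_Qmat_mulVec lam hk2 hS.ne', hQ, mul_zero, neg_zero]
  have hu : (lam ᵥ* Gmat n k lam) ⬝ᵥ (lam * η₀) = 0 := by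
    have hlu : lam ⬝ᵥ (lam ᵥ* Gmat n k lam) = ((k : ℝ) - 1) * k * esymmFun n k lam := by
      rw [mul_assoc, ← dEsymm_one, sub_one_mul_dEsymm lam hk2, mul_one, dotProduct_comm]
    have h := congrArg (lam ⬝ᵥ ·) hker
    simp only [Qmat_mulVec, dotProduct_sub, dotProduct_smul, smul_eq_mul, dotProduct_zero, hlu,
      dotProduct_mulVec lam (Gmat n k lam)] at h
    have : ((k : ℝ) - 1) * esymmFun n k lam * ((lam ᵥ* Gmat n k lam) ⬝ᵥ (lam * η₀)) = 0 := by
      linear_combination h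
    simpa [hk1.ne', hS.ne'] using this
  rw [Qmat_mulVec, hu, zero_smul, zero_sub, neg_eq_zero, smul_eq_zero] at hker
  exact hker.resolve_left (by positivity)

end Kernel

theorem det_Gmat_eq_zero_of_Qform_eq_zero {n k : ℕ} (hk2 : 2 ≤ k) (hkn : k ≤ n)
    {lam : Fin n → ℝ} (hlam : ∀ i, 0 < lam i) {η₀ : Fin n → ℝ} (hη₀ : η₀ ≠ 0)
    (hQ : Qform n k lam η₀ = 0) : (Gmat n k lam).det = 0 := by
  refine exists_mulVec_eq_zero_iff.1
    ⟨lam * η₀, fun h => hη₀ ?_, Gmat_mulVec_eq_zero_of_Qform_eq_zero lam hk2 hkn hlam hQ⟩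
  exact funext fun i => (mul_eq_zero.1 (congrFun h i)).resolve_left (hlam i).ne'

theorem stmt17_general (n k : ℕ) (hk2 : 2 ≤ k) (hkn : k ≤ n - 1)
    (lam : Fin n → ℝ) (hlam : ∀ i, 0 < lam i) :
    ((∀ η : Fin n → ℝ, Qform n k lam η ≤ 0) →
      ∀ η₀ : Fin n → ℝ, η₀ ≠ 0 → Qform n k lam η₀ = 0 → (Gmat n k lam).det = 0) ∧
    ((Gmat n k lam).det ≠ 0 →
      ∀ η : Fin n → ℝ, η ≠ 0 → Qform n k lam η < 0) := by
  have hkn' : k ≤ n := hkn.trans (Nat.sub_le n 1)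
  refine ⟨fun _ η₀ hη₀ hQ => det_Gmat_eq_zero_of_Qform_eq_zero hk2 hkn' hlam hη₀ hQ,
    fun hdet η hη => ?_⟩
  exact (Qform_nonpos k lam hkn' hlam η).lt_of_ne fun hQ =>
    hdet (det_Gmat_eq_zero_of_Qform_eq_zero hk2 hkn' hlam hη hQ)

/-- If the (negative semidefinite) form η ↦ d²f_k(λ, λη) vanishes at some
η̄ ≠ 0 then G_k(λ) is singular; conversely if G_k(λ) is nonsingular then the
form is negative definite. -/
theorem stmt17 (n k : ℕ) (hn : 2 ≤ n) (hk2 : 2 ≤ k) (hkn : k ≤ n - 1)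
    (lam : Fin n → ℝ) (hlam : ∀ i, 0 < lam i) :
    ((∀ η : Fin n → ℝ, Qform n k lam η ≤ 0) →
      ∀ η₀ : Fin n → ℝ, η₀ ≠ 0 → Qform n k lam η₀ = 0 → (Gmat n k lam).det = 0) ∧
    ((Gmat n k lam).det ≠ 0 →
      ∀ η : Fin n → ℝ, η ≠ 0 → Qform n k lam η < 0) :=
  stmt17_general n k hk2 hkn lam hlam
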